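/- Let a, b be integers with a ≥ 1, b ≥ 1 and a*b ≥ 4, and let c be the associated recursive sequence. Then for all natural numbers n and m, the product (∏_{i=1}^{n} c i) * (∏_{i=1}^{m} c i) divides ∏_{i=1}^{n+m} c i in ℤ; equivalently, the generalized binomial coefficient C(n,m) = (c_{n+m} · c_{n+m−1} ⋯ c_1) / ((c_n ⋯ c_1)(c_m ⋯ c_1)) is an integer. -/

import Mathlib

/-- The pair of recursive sequences `(c n, d n)` associated to a generalized
Cartan matrix of rank two with off-diagonal entries `-a`, `-b`:
`c 0 = d 0 = 0`, `c 1 = d 1 = 1`, `c (j+1) = a * d j - c (j-1)`,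
`d (j+1) = b * c j - d (j-1)`. -/
def KMcd (a b : ℤ) : ℕ → ℤ × ℤ
  | 0 => (0, 0)
  | 1 => (1, 1)
  | n + 2 => (a * (KMcd a b (n + 1)).2 - (KMcd a b n).1,
              b * (KMcd a b (n + 1)).1 - (KMcd a b n).2)

/-- The sequence `c`. -/
def KMc (a b : ℤ) (n : ℕ) : ℤ := (KMcd a b n).1

/-- The sequence `d`. -/
def KMd (a b : ℤ) (n : ℕ) : ℤ := (KMcd a b n).2

/-- `g n = gcd (c n) (d n)`. -/
def KMg (a b : ℤ) (n : ℕ) : ℕ := Int.gcd (KMc a b n) (KMd a b n)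

/-!
If `f (m + n) ∈ (f m, f n)` for all `m, n`, write `[n]! = f 1 ⋯ f n`: then
`[n+m]! = [n+m-1]! · f (n+m)`, and `[n]! [m]!` divides both `[n+m-1]! · f n` and
`[n+m-1]! · f m` by induction, hence divides `[n+m]!`.

For `c` this ideal condition comes from an addition formula. Since `c = d` at odd indices and
`b c = a d` at even ones, `c` alone satisfies `c (n+2) = k n · c (n+1) - c n` with `k` alternating
between `a` and `b`, and `d` is `c` with `a, b` exchanged. Every solution of this recursion is a
combination of `c` and the shifted exchanged sequence; a shift of `c` by `m` is a solution (with
`a, b` exchanged when `m` is odd), so `c (m+n+1)` is a combination of `c (m+1)` and `c m` with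
coefficients that are, up to the exchange, `c (n+1)` and `c n`.
-/

open Finset

theorem prod_Icc_mul_prod_Icc_dvd_prod_Icc_add {R : Type*} [CommSemiring R] {f : ℕ → R}
    (hf : ∀ m n, f (m + n) ∈ Ideal.span {f m, f n}) :
    ∀ n m : ℕ, (∏ i ∈ Icc 1 n, f i) * (∏ i ∈ Icc 1 m, f i) ∣ ∏ i ∈ Icc 1 (n + m), f i := by
  intro n
  induction n with
  | zero => simp
  | succ n ihn =>
    intro m
    induction m with
    | zero => simp
    | succ m ihm =>
      set A := ∏ i ∈ Icc 1 n, f i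
      set B := ∏ i ∈ Icc 1 m, f i
      set P := ∏ i ∈ Icc 1 (n + 1 + m), f i
      have hA : ∏ i ∈ Icc 1 (n + 1), f i = A * f (n + 1) := prod_Icc_succ_top (by omega) f
      have hB : ∏ i ∈ Icc 1 (m + 1), f i = B * f (m + 1) := prod_Icc_succ_top (by omega) f
      have hP : ∏ i ∈ Icc 1 (n + 1 + (m + 1)), f i = P * f (n + 1 + (m + 1)) :=
        prod_Icc_succ_top (by omega) f
      have hleft : A * (B * f (m + 1)) ∣ P := by
        have := ihn (m + 1)
        rwa [← Nat.add_assoc, Nat.add_right_comm, hB] at this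
      rw [hA] at ihm
      obtain ⟨u, v, huv⟩ := Ideal.mem_span_pair.mp (hf (n + 1) (m + 1))
      rw [hA, hB, hP, ← huv, mul_add, mul_left_comm P u, mul_left_comm P v]
      refine dvd_add (Dvd.dvd.mul_left ?_ u) (Dvd.dvd.mul_left ?_ v)
      · simpa only [mul_right_comm A] using mul_dvd_mul_right hleft (f (n + 1))
      · rw [← mul_assoc]; exact mul_dvd_mul_right ihm _

section

variable (a b : ℤ)

theorem KMcd_swap (n : ℕ) : KMcd b a n = (KMcd a b n).swap := by
  induction n using KMcd.induct with
  | case1 | case2 => rfl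
  | case3 n ih1 ih0 => simp [KMcd, ih1, ih0]

theorem KMd_eq_KMc_swap (n : ℕ) : KMd a b n = KMc b a n := by
  rw [KMd, KMc, KMcd_swap a b, Prod.fst_swap]

theorem KMc_add_two (n : ℕ) : KMc a b (n + 2) = a * KMd a b (n + 1) - KMc a b n := rfl

theorem KMd_add_two (n : ℕ) : KMd a b (n + 2) = b * KMc a b (n + 1) - KMd a b n := rfl

theorem KMc_KMd_parity (k : ℕ) :
    b * KMc a b (2 * k) = a * KMd a b (2 * k) ∧ KMc a b (2 * k + 1) = KMd a b (2 * k + 1) := by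
  induction k with
  | zero => exact ⟨by simp [KMc, KMd, KMcd], rfl⟩
  | succ k ih =>
    obtain ⟨heven, hodd⟩ := ih
    have heven' : b * KMc a b (2 * k + 2) = a * KMd a b (2 * k + 2) := by
      rw [KMc_add_two, KMd_add_two]
      linear_combination -(a * b) * hodd - heven
    refine ⟨heven', ?_⟩
    rw [show 2 * (k + 1) + 1 = 2 * k + 1 + 2 by ring, KMc_add_two, KMd_add_two a b (2 * k + 1)]
    linear_combination -heven' - hodd

theorem KMc_eq_KMd_of_odd {n : ℕ} (hn : Odd n) : KMc a b n = KMd a b n := by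
  obtain ⟨k, rfl⟩ := hn
  exact (KMc_KMd_parity a b k).2

theorem mul_KMc_eq_mul_KMd_of_even {n : ℕ} (hn : Even n) : b * KMc a b n = a * KMd a b n := by
  obtain ⟨k, rfl⟩ := hn
  simpa only [two_mul] using (KMc_KMd_parity a b k).1

theorem KMc_swap_of_odd {n : ℕ} (hn : Odd n) : KMc b a n = KMc a b n := by
  rw [← KMd_eq_KMc_swap, KMc_eq_KMd_of_odd a b hn]

theorem KMc_add_two_eq_ite (n : ℕ) :
    KMc a b (n + 2) = (if Even n then a else b) * KMc a b (n + 1) - KMc a b n := by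
  rw [KMc_add_two]
  split_ifs with hn
  · rw [KMc_eq_KMd_of_odd a b hn.add_one]
  · rw [← mul_KMc_eq_mul_KMd_of_even a b (Nat.not_even_iff_odd.mp hn).add_one]

theorem eq_KMc_of_recurrence {x : ℕ → ℤ}
    (hx : ∀ n, x (n + 2) = (if Even n then a else b) * x (n + 1) - x n) (n : ℕ) :
    x (n + 1) = x 1 * KMc a b (n + 1) - x 0 * KMc b a n := by
  induction n using Nat.twoStepInduction with
  | zero => simp [KMc, KMcd]
  | one => rw [hx 0, if_pos Even.zero]; simp [KMc, KMcd, mul_comm]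
  | more n ih0 ih1 =>
    have hcoeff : (if Even n then b else a) = if Even (n + 1) then a else b := by
      simp only [Nat.even_add_one, ite_not]
    rw [hx, ih0, ih1, KMc_add_two_eq_ite a b (n + 1), KMc_add_two_eq_ite b a n, hcoeff]
    ring

theorem KMc_add_succ_of_even {m : ℕ} (hm : Even m) (n : ℕ) :
    KMc a b (m + n + 1) = KMc a b (m + 1) * KMc a b (n + 1) - KMc a b m * KMc b a n := by
  refine eq_KMc_of_recurrence a b (x := fun j ↦ KMc a b (m + j)) (fun j ↦ ?_) n
  simp only [← add_assoc, KMc_add_two_eq_ite, Nat.even_add, hm, true_iff]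

theorem KMc_add_succ_of_odd {m : ℕ} (hm : Odd m) (n : ℕ) :
    KMc a b (m + n + 1) = KMc a b (m + 1) * KMc b a (n + 1) - KMc a b m * KMc a b n := by
  refine eq_KMc_of_recurrence b a (x := fun j ↦ KMc a b (m + j)) (fun j ↦ ?_) n
  simp only [← add_assoc, KMc_add_two_eq_ite, Nat.even_add, Nat.not_even_iff_odd.mpr hm, false_iff,
    ite_not]

theorem KMc_add_mem_span_of_even {m : ℕ} (hm : Even m) (n : ℕ) :
    KMc a b (m + n) ∈ Ideal.span {KMc a b m, KMc a b n} := by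
  rcases n with _ | n
  · exact Ideal.subset_span (Set.mem_insert _ _)
  · rw [← add_assoc, KMc_add_succ_of_even a b hm]
    exact Ideal.mem_span_pair.mpr ⟨-KMc b a n, KMc a b (m + 1), by ring⟩

theorem KMc_add_mem_span (m n : ℕ) : KMc a b (m + n) ∈ Ideal.span {KMc a b m, KMc a b n} := by
  rcases Nat.even_or_odd m with hm | hm
  · exact KMc_add_mem_span_of_even a b hm n
  rcases Nat.even_or_odd n with hn | ⟨k, rfl⟩
  · rw [add_comm, Set.pair_comm]
    exact KMc_add_mem_span_of_even a b hn m
  · rw [← add_assoc, KMc_add_succ_of_odd a b hm, KMc_swap_of_odd b a ⟨k, rfl⟩]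
    exact Ideal.mem_span_pair.mpr ⟨-KMc a b (2 * k), KMc a b (m + 1), by ring⟩

end

theorem generalized_binomial_C_integral_general
    (a b : ℤ) :
    ∀ n m : ℕ,
      (∏ i ∈ Finset.Icc 1 n, KMc a b i) * (∏ i ∈ Finset.Icc 1 m, KMc a b i) ∣
        ∏ i ∈ Finset.Icc 1 (n + m), KMc a b i :=
  prod_Icc_mul_prod_Icc_dvd_prod_Icc_add (KMc_add_mem_span a b)

theorem generalized_binomial_C_integral
    (a b : ℤ) (ha : 1 ≤ a) (hb : 1 ≤ b) (hab : 4 ≤ a * b) :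
    ∀ n m : ℕ,
      (∏ i ∈ Finset.Icc 1 n, KMc a b i) * (∏ i ∈ Finset.Icc 1 m, KMc a b i) ∣
        ∏ i ∈ Finset.Icc 1 (n + m), KMc a b i :=
  generalized_binomial_C_integral_general a b
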